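/- Let Λ₁, Λ₂ ⊆ ℂ be isogenous lattices each having complex multiplication, with End(Λᵢ) = 𝒪ᵢ. Then 𝒪₁ and 𝒪₂ are orders in the same imaginary quadratic number field K, and the multiplier ring of the lattice product satisfies End(Λ₁·Λ₂) = 𝒪₁·𝒪₂, which is the smallest order of K containing both 𝒪₁ and 𝒪₂ (equivalently, the order of conductor gcd of the two conductors). -/

import Mathlib

noncomputable section

/-- The multiplier ring `End(Λ) = {α ∈ ℂ : αΛ ⊆ Λ}` of an additive subgroup of ℂ. -/
def multiplierRing (Λ : AddSubgroup ℂ) : Subring ℂ where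
  carrier := {α : ℂ | ∀ x ∈ Λ, α * x ∈ Λ}
  one_mem' := fun x hx => by simpa using hx
  mul_mem' := fun {a b} ha hb x hx => by simpa [mul_assoc] using ha _ (hb x hx)
  add_mem' := fun {a b} ha hb x hx => by
    have := Λ.add_mem (ha x hx) (hb x hx); simpa [add_mul] using this
  zero_mem' := fun x hx => by simpa using Λ.zero_mem
  neg_mem' := fun {a} ha x hx => by simpa [neg_mul] using Λ.neg_mem (ha x hx)

/-- A lattice in ℂ: a rank-2 free ℤ-submodule spanning ℂ over ℝ. -/
def IsLattice (Λ : AddSubgroup ℂ) : Prop :=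
  ∃ v w : ℂ, LinearIndependent ℝ ![v, w] ∧ Λ = AddSubgroup.closure {v, w}

/-- The lattice product: the additive subgroup generated by all products `a * b`. -/
def latticeProduct (A B : AddSubgroup ℂ) : AddSubgroup ℂ :=
  AddSubgroup.closure {z : ℂ | ∃ a ∈ A, ∃ b ∈ B, z = a * b}

/-- An imaginary quadratic number field embedded in ℂ. -/
def IsImagQuad (K : Subfield ℂ) : Prop :=
  Module.finrank ℚ K = 2 ∧ ∃ z : K, (z : ℂ).im ≠ 0

/-- An order in `K`: a subring of `K` free of rank 2 as a ℤ-module. -/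
def IsOrderIn (K : Subfield ℂ) (O : Subring ℂ) : Prop :=
  O ≤ K.toSubring ∧ ∃ x y : ℂ, LinearIndependent ℝ ![x, y] ∧
    O.toAddSubgroup = AddSubgroup.closure {x, y}

-- zsmul on ℂ is int-cast mul
lemma zsmul_c (m : ℤ) (z : ℂ) : m • z = (m : ℂ) * z := by
  simp [zsmul_eq_mul]

lemma mem_closure_pairC {x y z : ℂ} :
    z ∈ AddSubgroup.closure ({x, y} : Set ℂ) ↔ ∃ m n : ℤ, z = (m : ℂ) * x + n * y := by
  rw [AddSubgroup.mem_closure_pair]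
  constructor
  · rintro ⟨m, n, h⟩; exact ⟨m, n, by rw [← h, zsmul_c, zsmul_c]⟩
  · rintro ⟨m, n, h⟩; exact ⟨m, n, by rw [zsmul_c, zsmul_c, h]⟩

lemma mem_closure_quadC {g₁ g₂ g₃ g₄ z : ℂ}
    (h : z ∈ AddSubgroup.closure ({g₁, g₂, g₃, g₄} : Set ℂ)) :
    ∃ m n p q : ℤ, z = (m : ℂ) * g₁ + n * g₂ + p * g₃ + q * g₄ := by
  induction h using AddSubgroup.closure_induction with
  | mem x hx =>
    rcases hx with h | h | h | h
    · exact ⟨1, 0, 0, 0, by simp [h]⟩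
    · exact ⟨0, 1, 0, 0, by simp [h]⟩
    · exact ⟨0, 0, 1, 0, by simp [h]⟩
    · simp only [Set.mem_singleton_iff] at h; exact ⟨0, 0, 0, 1, by simp [h]⟩
  | zero => exact ⟨0, 0, 0, 0, by simp⟩
  | add x y hx hy ihx ihy =>
    obtain ⟨m, n, p, q, rfl⟩ := ihx
    obtain ⟨m', n', p', q', rfl⟩ := ihy
    exact ⟨m + m', n + n', p + p', q + q', by push_cast; ring⟩
  | neg x hx ihx =>
    obtain ⟨m, n, p, q, rfl⟩ := ihx
    exact ⟨-m, -n, -p, -q, by push_cast; ring⟩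

lemma quad_mem_closure {g₁ g₂ g₃ g₄ : ℂ} (m n p q : ℤ) :
    (m : ℂ) * g₁ + n * g₂ + p * g₃ + q * g₄ ∈
      AddSubgroup.closure ({g₁, g₂, g₃, g₄} : Set ℂ) := by
  have h1 : g₁ ∈ AddSubgroup.closure ({g₁, g₂, g₃, g₄} : Set ℂ) :=
    AddSubgroup.subset_closure (by simp)
  have h2 : g₂ ∈ AddSubgroup.closure ({g₁, g₂, g₃, g₄} : Set ℂ) :=
    AddSubgroup.subset_closure (by simp)
  have h3 : g₃ ∈ AddSubgroup.closure ({g₁, g₂, g₃, g₄} : Set ℂ) :=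
    AddSubgroup.subset_closure (by simp)
  have h4 : g₄ ∈ AddSubgroup.closure ({g₁, g₂, g₃, g₄} : Set ℂ) :=
    AddSubgroup.subset_closure (by simp)
  have := add_mem (add_mem (add_mem (zsmul_mem h1 m) (zsmul_mem h2 n)) (zsmul_mem h3 p))
    (zsmul_mem h4 q)
  simpa [zsmul_c] using this

lemma pair_mem_closure {x y : ℂ} (m n : ℤ) :
    (m : ℂ) * x + n * y ∈ AddSubgroup.closure ({x, y} : Set ℂ) :=
  mem_closure_pairC.2 ⟨m, n, rfl⟩


lemma sq_ne {v : ℂ} (hv : v ≠ 0) : v.re ^ 2 + v.im ^ 2 ≠ 0 := by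
  have := Complex.normSq_pos.mpr hv
  rw [Complex.normSq_apply] at this
  nlinarith

-- linear independence over ℝ via determinant
lemma li_det {v w : ℂ} :
    LinearIndependent ℝ ![v, w] ↔ v.re * w.im - v.im * w.re ≠ 0 := by
  rw [LinearIndependent.pair_iff]
  constructor
  · intro h hd
    by_cases hv : v = 0
    · rcases h 1 0 (by simp [hv]) with ⟨h1, _⟩; norm_num at h1
    · have key : (v.re * w.re + v.im * w.im) • v + (-(v.re ^ 2 + v.im ^ 2)) • w = 0 := by
        apply Complex.ext <;>
          simp only [Complex.add_im, Complex.add_re, Complex.real_smul, Complex.mul_re,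
            Complex.mul_im, Complex.ofReal_re, Complex.ofReal_im, Complex.zero_re,
            Complex.zero_im]
        · linear_combination v.im * hd
        · linear_combination (-v.re) * hd
      rcases h _ _ key with ⟨_, h2⟩
      exact sq_ne hv (by linarith [neg_eq_zero.mp h2])
  · intro hd s t hst
    have hre : s * v.re + t * w.re = 0 := by
      have := congrArg Complex.re hst
      simpa [Complex.real_smul, Complex.mul_re] using this
    have him : s * v.im + t * w.im = 0 := by
      have := congrArg Complex.im hst
      simpa [Complex.real_smul, Complex.mul_im] using this
    constructor
    · by_contra hs
      apply hd
      have h1 : s * (v.re * w.im - v.im * w.re) = 0 := by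
        linear_combination w.im * hre - w.re * him
      rcases mul_eq_zero.mp h1 with h | h
      · exact absurd h hs
      · exact h
    · by_contra ht
      apply hd
      have h1 : t * (v.re * w.im - v.im * w.re) = 0 := by
        linear_combination v.re * him - v.im * hre
      rcases mul_eq_zero.mp h1 with h | h
      · exact absurd h ht
      · exact h

lemma li_scaled {v ω : ℂ} (hv : v ≠ 0) (hω : ω.im ≠ 0) :
    LinearIndependent ℝ ![v, v * ω] := by
  rw [li_det]
  have : v.re * (v * ω).im - v.im * (v * ω).re = (v.re ^ 2 + v.im ^ 2) * ω.im := by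
    simp [Complex.mul_re, Complex.mul_im]; ring
  rw [this]
  exact mul_ne_zero (sq_ne hv) hω

lemma li_nonreal {v w : ℂ} (h : LinearIndependent ℝ ![v, w]) :
    v ≠ 0 ∧ (w / v).im ≠ 0 := by
  rw [li_det] at h
  have hv : v ≠ 0 := by
    rintro rfl; simp at h
  refine ⟨hv, ?_⟩
  have : (w / v).im = (v.re * w.im - v.im * w.re) / (v.re ^ 2 + v.im ^ 2) := by
    rw [Complex.div_im, Complex.normSq_apply]; ring
  rw [this]
  exact div_ne_zero h (sq_ne hv)

lemma mem_multiplierRing {α : ℂ} {Λ : AddSubgroup ℂ} :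
    α ∈ multiplierRing Λ ↔ ∀ x ∈ Λ, α * x ∈ Λ := Iff.rfl

lemma mul_mem_latticeProduct {A B : AddSubgroup ℂ} {a b : ℂ} (ha : a ∈ A) (hb : b ∈ B) :
    a * b ∈ latticeProduct A B :=
  AddSubgroup.subset_closure ⟨a, ha, b, hb, rfl⟩

lemma latticeProduct_le {A B : AddSubgroup ℂ} {C : AddSubgroup ℂ}
    (h : ∀ a ∈ A, ∀ b ∈ B, a * b ∈ C) : latticeProduct A B ≤ C := by
  apply (AddSubgroup.closure_le _).2
  rintro z ⟨a, ha, b, hb, rfl⟩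
  exact h a ha b hb

lemma latticeProduct_comm (A B : AddSubgroup ℂ) :
    latticeProduct A B = latticeProduct B A := by
  apply le_antisymm <;>
    exact latticeProduct_le fun a ha b hb => mul_comm b a ▸ mul_mem_latticeProduct hb ha

-- multiplying a closure member on the right stays in H if generators do
lemma closure_mul_right_mem {S : Set ℂ} {H : AddSubgroup ℂ} {x c : ℂ}
    (hx : x ∈ AddSubgroup.closure S) (h : ∀ s ∈ S, s * c ∈ H) : x * c ∈ H := by
  induction hx using AddSubgroup.closure_induction with
  | mem s hs => exact h s hs
  | zero => simpa using H.zero_mem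
  | add u v hu hv ihu ihv => simpa [add_mul] using H.add_mem ihu ihv
  | neg u hu ihu => simpa [neg_mul] using H.neg_mem ihu

lemma closure_mul_left_mem {S : Set ℂ} {H : AddSubgroup ℂ} {x c : ℂ}
    (hx : x ∈ AddSubgroup.closure S) (h : ∀ s ∈ S, c * s ∈ H) : c * x ∈ H := by
  induction hx using AddSubgroup.closure_induction with
  | mem s hs => exact h s hs
  | zero => simpa using H.zero_mem
  | add u v hu hv ihu ihv => simpa [mul_add] using H.add_mem ihu ihv
  | neg u hu ihu => simpa [mul_neg] using H.neg_mem ihu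

lemma latticeProduct_assoc (A B C : AddSubgroup ℂ) :
    latticeProduct (latticeProduct A B) C = latticeProduct A (latticeProduct B C) := by
  apply le_antisymm
  · apply latticeProduct_le
    intro x hx c hc
    refine closure_mul_right_mem hx ?_
    rintro s ⟨a, ha, b, hb, rfl⟩
    rw [mul_assoc]
    exact mul_mem_latticeProduct ha (mul_mem_latticeProduct hb hc)
  · apply latticeProduct_le
    intro a ha x hx
    refine closure_mul_left_mem hx ?_
    rintro s ⟨b, hb, c, hc, rfl⟩
    rw [← mul_assoc]
    exact mul_mem_latticeProduct (mul_mem_latticeProduct ha hb) hc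

lemma mem_closure_pairC' {x y z : ℂ} :
    z ∈ AddSubgroup.closure ({x, y} : Set ℂ) ↔ ∃ m n : ℤ, z = (m : ℂ) * x + n * y := by
  rw [AddSubgroup.mem_closure_pair]
  constructor
  · rintro ⟨m, n, h⟩; exact ⟨m, n, by rw [← h]; simp [zsmul_eq_mul]⟩
  · rintro ⟨m, n, h⟩; exact ⟨m, n, by rw [h]; simp [zsmul_eq_mul]⟩

lemma quad_mem_closure' {g₁ g₂ g₃ g₄ : ℂ} (m n p q : ℤ) :
    (m : ℂ) * g₁ + n * g₂ + p * g₃ + q * g₄ ∈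
      AddSubgroup.closure ({g₁, g₂, g₃, g₄} : Set ℂ) := by
  have h1 : g₁ ∈ AddSubgroup.closure ({g₁, g₂, g₃, g₄} : Set ℂ) :=
    AddSubgroup.subset_closure (by simp)
  have h2 : g₂ ∈ AddSubgroup.closure ({g₁, g₂, g₃, g₄} : Set ℂ) :=
    AddSubgroup.subset_closure (by simp)
  have h3 : g₃ ∈ AddSubgroup.closure ({g₁, g₂, g₃, g₄} : Set ℂ) :=
    AddSubgroup.subset_closure (by simp)
  have h4 : g₄ ∈ AddSubgroup.closure ({g₁, g₂, g₃, g₄} : Set ℂ) :=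
    AddSubgroup.subset_closure (by simp)
  have := add_mem (add_mem (add_mem (zsmul_mem h1 m) (zsmul_mem h2 n)) (zsmul_mem h3 p))
    (zsmul_mem h4 q)
  simpa [zsmul_eq_mul] using this

lemma latticeProduct_closure_pair {x₁ x₂ y₁ y₂ : ℂ} :
    latticeProduct (AddSubgroup.closure {x₁, x₂}) (AddSubgroup.closure {y₁, y₂}) =
      AddSubgroup.closure ({x₁ * y₁, x₁ * y₂, x₂ * y₁, x₂ * y₂} : Set ℂ) := by
  apply le_antisymm
  · apply latticeProduct_le
    intro a ha b hb
    obtain ⟨m, n, rfl⟩ := mem_closure_pairC'.1 ha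
    obtain ⟨p, q, rfl⟩ := mem_closure_pairC'.1 hb
    have : ((m : ℂ) * x₁ + n * x₂) * ((p : ℂ) * y₁ + q * y₂) =
        ((m * p : ℤ) : ℂ) * (x₁ * y₁) + ((m * q : ℤ) : ℂ) * (x₁ * y₂) +
          ((n * p : ℤ) : ℂ) * (x₂ * y₁) + ((n * q : ℤ) : ℂ) * (x₂ * y₂) := by
      push_cast; ring
    rw [this]
    exact quad_mem_closure' _ _ _ _
  · apply (AddSubgroup.closure_le _).2
    intro z hz
    have hx₁ : x₁ ∈ AddSubgroup.closure ({x₁, x₂} : Set ℂ) :=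
      AddSubgroup.subset_closure (by simp)
    have hx₂ : x₂ ∈ AddSubgroup.closure ({x₁, x₂} : Set ℂ) :=
      AddSubgroup.subset_closure (by simp)
    have hy₁ : y₁ ∈ AddSubgroup.closure ({y₁, y₂} : Set ℂ) :=
      AddSubgroup.subset_closure (by simp)
    have hy₂ : y₂ ∈ AddSubgroup.closure ({y₁, y₂} : Set ℂ) :=
      AddSubgroup.subset_closure (by simp)
    rcases hz with h | h | h | h <;> subst h
    · exact mul_mem_latticeProduct hx₁ hy₁
    · exact mul_mem_latticeProduct hx₁ hy₂
    · exact mul_mem_latticeProduct hx₂ hy₁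
    · exact mul_mem_latticeProduct hx₂ hy₂

lemma mem_multiplierRing_closure_pair {α x y : ℂ}
    (hx : α * x ∈ AddSubgroup.closure ({x, y} : Set ℂ))
    (hy : α * y ∈ AddSubgroup.closure ({x, y} : Set ℂ)) :
    α ∈ multiplierRing (AddSubgroup.closure {x, y}) := by
  intro z hz
  exact closure_mul_left_mem hz (by rintro s (h | h) <;> subst s <;> assumption)

lemma bezout3 {a b c : ℤ} (h : Int.gcd a (Int.gcd b c) = 1) :
    ∃ x y z : ℤ, a * x + b * y + c * z = 1 := by
  have h1 : (Int.gcd a (Int.gcd b c) : ℤ) = a * Int.gcdA a (Int.gcd b c) +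
      (Int.gcd b c : ℤ) * Int.gcdB a (Int.gcd b c) := Int.gcd_eq_gcd_ab _ _
  have h2 : (Int.gcd b c : ℤ) = b * Int.gcdA b c + c * Int.gcdB b c := Int.gcd_eq_gcd_ab _ _
  refine ⟨Int.gcdA a (Int.gcd b c), Int.gcdA b c * Int.gcdB a (Int.gcd b c),
    Int.gcdB b c * Int.gcdB a (Int.gcd b c), ?_⟩
  rw [h] at h1
  push_cast at h1
  linear_combination -h1 - Int.gcdB a (Int.gcd b c) * h2

lemma dvd_of_dvd_mul_gcd {a b c n : ℤ} (h : Int.gcd a (Int.gcd b c) = 1)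
    (hb : a ∣ n * b) (hc : a ∣ n * c) : a ∣ n := by
  obtain ⟨x, y, z, hxyz⟩ := bezout3 h
  have : n = a * (n * x) + (n * b) * y + (n * c) * z := by linear_combination n * hxyz.symm
  rw [this]
  exact dvd_add (dvd_add (Dvd.intro _ rfl) (hb.mul_right y)) (hc.mul_right z)

lemma rat_den_mul (q : ℚ) : ((q.den : ℂ)) * (q : ℂ) = (q.num : ℂ) := by
  rw [Rat.cast_def]
  have hd : (q.den : ℂ) ≠ 0 := Nat.cast_ne_zero.mpr q.den_nz
  field_simp

lemma int_of_den_dvd (q : ℚ) (D : ℤ) (h : (q.den : ℤ) ∣ D) :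
    ∃ m : ℤ, (D : ℂ) * (q : ℂ) = (m : ℂ) := by
  obtain ⟨k, hk⟩ := h
  refine ⟨k * q.num, ?_⟩
  have : (D : ℂ) = (q.den : ℂ) * k := by exact_mod_cast hk
  rw [this]
  push_cast
  linear_combination (k : ℂ) * rat_den_mul q

lemma exists_primitive_rel {ω : ℂ} (s t : ℚ) (h : ω ^ 2 = (s : ℂ) + t * ω) :
    ∃ a b c : ℤ, 0 < a ∧ Int.gcd a (Int.gcd b c) = 1 ∧
      (a : ℂ) * ω ^ 2 + b * ω + c = 0 := by
  set A : ℤ := (s.den : ℤ) * (t.den : ℤ) with hA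
  set B : ℤ := -(t.num * s.den) with hB
  set C : ℤ := -(s.num * t.den) with hC
  have hs := rat_den_mul s
  have ht := rat_den_mul t
  have hA0 : 0 < A := by positivity
  have hrel : (A : ℂ) * ω ^ 2 + B * ω + C = 0 := by
    push_cast [hA, hB, hC]
    linear_combination ((s.den : ℂ) * (t.den : ℂ)) * h + (t.den : ℂ) * hs + ((s.den : ℂ) * ω) * ht
  set g : ℕ := Int.gcd A (Int.gcd B C) with hg
  have hgA : (g : ℤ) ∣ A := Int.gcd_dvd_left _ _
  have hgB : (g : ℤ) ∣ B := dvd_trans (Int.gcd_dvd_right _ _) (Int.gcd_dvd_left _ _)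
  have hgC : (g : ℤ) ∣ C := dvd_trans (Int.gcd_dvd_right _ _) (Int.gcd_dvd_right _ _)
  have hg0 : (g : ℤ) ≠ 0 := by
    intro h0
    rw [Int.natCast_eq_zero] at h0
    have := Int.gcd_eq_zero_iff.mp h0
    omega
  obtain ⟨a, ha⟩ := hgA
  obtain ⟨b, hb⟩ := hgB
  obtain ⟨c, hc⟩ := hgC
  have ha0 : 0 < a := by nlinarith [hA0, Int.natCast_nonneg g]
  refine ⟨a, b, c, ha0, ?_, ?_⟩
  · set e : ℕ := Int.gcd a (Int.gcd b c) with he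
    have heA : ((e * g : ℕ) : ℤ) ∣ A := by
      push_cast
      rw [ha, mul_comm (e:ℤ)]
      exact mul_dvd_mul_left _ (Int.gcd_dvd_left _ _)
    have heB : ((e * g : ℕ) : ℤ) ∣ B := by
      push_cast
      rw [hb, mul_comm (e:ℤ)]
      exact mul_dvd_mul_left _ (dvd_trans (Int.gcd_dvd_right _ _) (Int.gcd_dvd_left _ _))
    have heC : ((e * g : ℕ) : ℤ) ∣ C := by
      push_cast
      rw [hc, mul_comm (e:ℤ)]
      exact mul_dvd_mul_left _ (dvd_trans (Int.gcd_dvd_right _ _) (Int.gcd_dvd_right _ _))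
    have hdvd : ((e * g : ℕ) : ℤ) ∣ (g : ℤ) := Int.dvd_coe_gcd heA (Int.dvd_coe_gcd heB heC)
    obtain ⟨k, hk⟩ := hdvd
    push_cast at hk
    have : (1 : ℤ) = e * k := by
      have hgg : (g : ℤ) * 1 = (g : ℤ) * ((e : ℤ) * k) := by linarith [hk]
      have := mul_left_cancel₀ hg0 hgg
      linarith
    have he1 : (e : ℤ) = 1 := by
      rcases Int.eq_one_of_mul_eq_one_right (Int.natCast_nonneg e) this.symm with h1
      exact h1
    exact_mod_cast he1
  · have : (g : ℂ) * ((a : ℂ) * ω ^ 2 + b * ω + c) = 0 := by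
      have hac : (A : ℂ) = (g : ℂ) * a := by exact_mod_cast ha
      have hbc : (B : ℂ) = (g : ℂ) * b := by exact_mod_cast hb
      have hcc : (C : ℂ) = (g : ℂ) * c := by exact_mod_cast hc
      linear_combination hrel - ω ^ 2 * hac - ω * hbc - hcc
    rcases mul_eq_zero.mp this with h0 | h0
    · exact absurd (by exact_mod_cast h0 : (g : ℤ) = 0) hg0
    · exact h0

def ratSpan2 (ω : ℂ) (s t : ℚ) (h2 : ω ^ 2 = (s : ℂ) + t * ω) (him : ω.im ≠ 0) :
    Subfield ℂ where
  carrier := {z : ℂ | ∃ p q : ℚ, z = (p : ℂ) + q * ω}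
  zero_mem' := ⟨0, 0, by simp⟩
  one_mem' := ⟨1, 0, by simp⟩
  add_mem' := by
    rintro a b ⟨p, q, rfl⟩ ⟨r, u, rfl⟩
    exact ⟨p + r, q + u, by push_cast; ring⟩
  neg_mem' := by
    rintro a ⟨p, q, rfl⟩
    exact ⟨-p, -q, by push_cast; ring⟩
  mul_mem' := by
    rintro a b ⟨p, q, rfl⟩ ⟨r, u, rfl⟩
    refine ⟨p * r + q * u * s, p * u + q * r + q * u * t, ?_⟩
    push_cast
    linear_combination ((q : ℂ) * u) * h2
  inv_mem' := by
    rintro x ⟨p, q, rfl⟩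
    by_cases hx : (p : ℂ) + q * ω = 0
    · rw [hx]
      exact ⟨0, 0, by simp⟩
    · set N : ℚ := p ^ 2 + p * q * t - q ^ 2 * s with hN
      have hN2 : (p : ℂ) + q * t - q * ω ≠ 0 := by
        by_cases hq : q = 0
        · subst hq
          simpa using fun h => hx (by simpa using h)
        · intro h0
          have := congrArg Complex.im h0
          simp [Complex.mul_im] at this
          rcases this with h | h
          · exact hq (by exact_mod_cast h)
          · exact him h
      have hNx : ((p : ℂ) + q * ω) * ((p : ℂ) + q * t - q * ω) = (N : ℂ) := by
        rw [hN]; push_cast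
        linear_combination (-(q : ℂ) ^ 2) * h2
      have hN0 : (N : ℂ) ≠ 0 := by rw [← hNx]; exact mul_ne_zero hx hN2
      refine ⟨(p + q * t) / N, -q / N, ?_⟩
      have hmul : ((((p + q * t) / N : ℚ) : ℂ) + ((-q / N : ℚ) : ℂ) * ω) * ((p : ℂ) + q * ω)
          = 1 := by
        push_cast
        field_simp
        linear_combination hNx
      exact (eq_inv_of_mul_eq_one_left hmul).symm

lemma coe_rat_smul (K : Subfield ℂ) (x : K) (a : ℚ) :
    ((a • x : K) : ℂ) = (a : ℂ) * (x : ℂ) := by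
  push_cast
  rw [Rat.smul_def]

lemma ratSpan2_isImagQuad (ω : ℂ) (s t : ℚ) (h2 : ω ^ 2 = (s : ℂ) + t * ω)
    (him : ω.im ≠ 0) : IsImagQuad (ratSpan2 ω s t h2 him) := by
  set K := ratSpan2 ω s t h2 him with hK
  have homega : ω ∈ K := ⟨0, 1, by simp⟩
  set e1 : K := 1 with he1
  set e2 : K := ⟨ω, homega⟩ with he2
  have hcoe1 : ((e1 : K) : ℂ) = 1 := rfl
  have hcoe2 : ((e2 : K) : ℂ) = ω := rfl
  have hli : LinearIndependent ℚ ![e1, e2] := by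
    rw [LinearIndependent.pair_iff]
    intro a b hab
    have h0 : ((a • e1 + b • e2 : K) : ℂ) = 0 := by rw [hab]; rfl
    push_cast [coe_rat_smul, hcoe1, hcoe2] at h0
    have hb : (b : ℝ) * ω.im = 0 := by
      have := congrArg Complex.im h0
      simpa [Complex.mul_im] using this
    have hb0 : b = 0 := by
      rcases mul_eq_zero.mp hb with h | h
      · exact_mod_cast h
      · exact absurd h him
    subst hb0
    simp at h0
    refine ⟨?_, rfl⟩
    exact_mod_cast h0
  have hsp : ⊤ ≤ Submodule.span ℚ (Set.range ![e1, e2]) := by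
    intro z _
    have : Set.range ![e1, e2] = {e1, e2} := by
      ext u
      simp [Matrix.range_cons, Matrix.range_empty]
      tauto
    rw [this, Submodule.mem_span_pair]
    obtain ⟨p, q, hz⟩ := z.2
    refine ⟨p, q, ?_⟩
    apply Subtype.ext
    have hps : ((p • e1 + q • e2 : K) : ℂ) = (p : ℂ) * 1 + (q : ℂ) * ω := by
      push_cast
      rw [Rat.smul_def, Rat.smul_def, hcoe1]
    rw [hps, hz]
    ring
  have b : Module.Basis (Fin 2) ℚ K := Module.Basis.mk hli hsp
  constructor
  · rw [Module.finrank_eq_card_basis b]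
    simp
  · exact ⟨⟨ω, homega⟩, him⟩

open AddSubgroup in
lemma sublattice {u w : ℂ} (hli : LinearIndependent ℝ ![u, w]) (H : AddSubgroup ℂ)
    (hle : H ≤ AddSubgroup.closure {u, w}) {h₁ h₂ : ℂ} (hh1 : h₁ ∈ H) (hh2 : h₂ ∈ H)
    (hind : LinearIndependent ℝ ![h₁, h₂]) :
    ∃ x y : ℂ, LinearIndependent ℝ ![x, y] ∧ H = AddSubgroup.closure {x, y} := by
  have hdet := li_det.mp hli
  -- subgroup of second coordinates
  set B : AddSubgroup ℤ :=
    { carrier := {n : ℤ | ∃ m : ℤ, (m : ℂ) * u + n * w ∈ H}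
      zero_mem' := ⟨0, by simpa using H.zero_mem⟩
      add_mem' := by
        rintro n n' ⟨m, hm⟩ ⟨m', hm'⟩
        exact ⟨m + m', by push_cast; simpa [add_mul, add_add_add_comm] using H.add_mem hm hm'⟩
      neg_mem' := by
        rintro n ⟨m, hm⟩
        exact ⟨-m, by push_cast; simpa [neg_mul, neg_add, add_comm] using H.neg_mem hm⟩ } with hBdef
  obtain ⟨b, hB⟩ := Int.subgroup_cyclic B
  have memB : ∀ n : ℤ, (∃ m : ℤ, (m : ℂ) * u + n * w ∈ H) ↔ b ∣ n := by
    intro n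
    constructor
    · intro hn
      have : n ∈ B := hn
      rw [hB, AddSubgroup.mem_closure_singleton] at this
      obtain ⟨k, hk⟩ := this
      rw [smul_eq_mul] at hk
      exact ⟨k, by rw [← hk]; ring⟩
    · rintro ⟨k, rfl⟩
      have : b * k ∈ B := by
        rw [hB, AddSubgroup.mem_closure_singleton]
        exact ⟨k, by rw [smul_eq_mul]; ring⟩
      exact this
  -- coordinates of lattice elements
  have coords : ∀ z ∈ H, ∃ m n : ℤ, z = (m : ℂ) * u + n * w := fun z hz =>
    mem_closure_pairC.1 (hle hz)
  obtain ⟨m₁, n₁, hz1⟩ := coords h₁ hh1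
  obtain ⟨m₂, n₂, hz2⟩ := coords h₂ hh2
  have hb0 : b ≠ 0 := by
    rintro rfl
    obtain ⟨k₁, hk₁⟩ := (memB n₁).1 ⟨m₁, hz1 ▸ hh1⟩
    obtain ⟨k₂, hk₂⟩ := (memB n₂).1 ⟨m₂, hz2 ▸ hh2⟩
    simp only [zero_mul] at hk₁ hk₂
    have hd := li_det.mp hind
    apply hd
    rw [hz1, hz2, hk₁, hk₂]
    push_cast
    simp [Complex.add_re, Complex.add_im, Complex.mul_re, Complex.mul_im]
    ring
  obtain ⟨m₀, hm₀⟩ := (memB b).2 dvd_rfl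
  set A : AddSubgroup ℤ :=
    { carrier := {m : ℤ | (m : ℂ) * u ∈ H}
      zero_mem' := by simpa using H.zero_mem
      add_mem' := by
        intro m m' hm hm'
        show ((m + m' : ℤ) : ℂ) * u ∈ H
        push_cast
        rw [add_mul]
        exact H.add_mem hm hm'
      neg_mem' := by
        intro m hm
        show ((-m : ℤ) : ℂ) * u ∈ H
        push_cast
        rw [neg_mul]
        exact H.neg_mem hm } with hAdef
  obtain ⟨a, hA⟩ := Int.subgroup_cyclic A
  have memA : ∀ m : ℤ, ((m : ℂ) * u ∈ H) ↔ a ∣ m := by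
    intro m
    constructor
    · intro hm
      have : m ∈ A := hm
      rw [hA, AddSubgroup.mem_closure_singleton] at this
      obtain ⟨k, hk⟩ := this
      rw [smul_eq_mul] at hk
      exact ⟨k, by rw [← hk]; ring⟩
    · rintro ⟨k, rfl⟩
      have : a * k ∈ A := by
        rw [hA, AddSubgroup.mem_closure_singleton]
        exact ⟨k, by rw [smul_eq_mul]; ring⟩
      exact this
  obtain ⟨k₁, hk₁⟩ := (memB n₁).1 ⟨m₁, hz1 ▸ hh1⟩
  obtain ⟨k₂, hk₂⟩ := (memB n₂).1 ⟨m₂, hz2 ▸ hh2⟩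
  have hy₀ : (m₀ : ℂ) * u + b * w ∈ H := hm₀
  have hc : ∀ (z : ℂ) (m n k : ℤ), z ∈ H → z = (m : ℂ) * u + n * w → n = b * k →
      ((m - k * m₀ : ℤ) : ℂ) * u ∈ H := by
    intro z m n k hz hzc hnk
    have hsub := H.sub_mem hz (AddSubgroup.zsmul_mem H hy₀ k)
    have : z - k • ((m₀ : ℂ) * u + b * w) = ((m - k * m₀ : ℤ) : ℂ) * u := by
      rw [hzc, hnk, zsmul_c]
      push_cast
      ring
    rwa [this] at hsub
  have hc₁ := hc h₁ m₁ n₁ k₁ hh1 hz1 hk₁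
  have hc₂ := hc h₂ m₂ n₂ k₂ hh2 hz2 hk₂
  have ha0 : a ≠ 0 := by
    rintro rfl
    obtain ⟨l₁, hl₁⟩ := (memA _).1 hc₁
    obtain ⟨l₂, hl₂⟩ := (memA _).1 hc₂
    simp only [zero_mul] at hl₁ hl₂
    have hm1 : m₁ = k₁ * m₀ := by omega
    have hm2 : m₂ = k₂ * m₀ := by omega
    have hd := li_det.mp hind
    apply hd
    rw [hz1, hz2, hm1, hm2, hk₁, hk₂]
    push_cast
    simp [Complex.add_re, Complex.add_im, Complex.mul_re, Complex.mul_im]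
    ring
  refine ⟨(a : ℂ) * u, (m₀ : ℂ) * u + b * w, ?_, ?_⟩
  · rw [li_det]
    have : ((a : ℂ) * u).re * ((m₀ : ℂ) * u + b * w).im -
        ((a : ℂ) * u).im * ((m₀ : ℂ) * u + b * w).re =
        (a : ℝ) * ((b : ℝ) * (u.re * w.im - u.im * w.re)) := by
      simp [Complex.add_re, Complex.add_im, Complex.mul_re, Complex.mul_im]
      ring
    rw [this]
    exact mul_ne_zero (Int.cast_ne_zero.2 ha0)
      (mul_ne_zero (Int.cast_ne_zero.2 hb0) hdet)
  · apply le_antisymm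
    · intro z hz
      obtain ⟨m, n, hzc⟩ := coords z hz
      obtain ⟨k, hk⟩ := (memB n).1 ⟨m, hzc ▸ hz⟩
      have hcz := hc z m n k hz hzc hk
      obtain ⟨l, hl⟩ := (memA _).1 hcz
      refine mem_closure_pairC.2 ⟨l, k, ?_⟩
      rw [hzc, hk]
      have hm : m = a * l + k * m₀ := by omega
      rw [hm]
      push_cast
      ring
    · apply (AddSubgroup.closure_le _).2
      rintro z (h | h) <;> subst z
      · have : a ∈ A := by
          rw [hA]
          exact AddSubgroup.subset_closure rfl
        exact this
      · exact hm₀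


lemma int_coords_zero {ω : ℂ} (him : ω.im ≠ 0) {X Y : ℤ}
    (h : (X : ℂ) + (Y : ℂ) * ω = 0) : X = 0 ∧ Y = 0 := by
  have hIm : (Y : ℝ) * ω.im = 0 := by
    have := congrArg Complex.im h
    simpa [Complex.add_im, Complex.mul_im] using this
  have hY : Y = 0 := by
    rcases mul_eq_zero.mp hIm with h' | h'
    · exact_mod_cast h'
    · exact absurd h' him
  subst hY
  simp at h
  exact ⟨by exact_mod_cast h, rfl⟩

lemma endChar {v ω : ℂ} (hv : v ≠ 0) (him : ω.im ≠ 0) {a b c : ℤ} (ha : (a : ℂ) ≠ 0)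
    (hgcd : Int.gcd a (Int.gcd b c) = 1) (hrel : (a : ℂ) * ω ^ 2 + b * ω + c = 0) :
    (multiplierRing (AddSubgroup.closure {v, v * ω})).toAddSubgroup =
      AddSubgroup.closure {1, (a : ℂ) * ω} := by
  have ha' : a ≠ 0 := by exact_mod_cast ha
  apply le_antisymm
  · intro β hβ
    have hβ' : ∀ x ∈ AddSubgroup.closure ({v, v * ω} : Set ℂ),
        β * x ∈ AddSubgroup.closure ({v, v * ω} : Set ℂ) := hβ
    have h1 := hβ' v (AddSubgroup.subset_closure (by simp))
    have h2 := hβ' (v * ω) (AddSubgroup.subset_closure (by simp))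
    obtain ⟨m, n, hmn⟩ := mem_closure_pairC.1 h1
    obtain ⟨m', n', hmn'⟩ := mem_closure_pairC.1 h2
    have hβeq : β = (m : ℂ) + n * ω := by
      apply mul_right_cancel₀ hv
      rw [hmn]; ring
    have hx : ((m : ℂ) + n * ω) * ω = (m' : ℂ) + n' * ω := by
      apply mul_right_cancel₀ hv
      have : β * (v * ω) = (((m : ℂ) + n * ω) * ω) * v := by rw [hβeq]; ring
      rw [← this, hmn']; ring
    have key : ((a * m' + n * c : ℤ) : ℂ) + ((a * n' - a * m + n * b : ℤ) : ℂ) * ω = 0 := by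
      push_cast
      linear_combination n * hrel - (a : ℂ) * hx
    obtain ⟨hX, hY⟩ := int_coords_zero him key
    have hdvd_b : a ∣ n * b := ⟨m - n', by linarith [hY]⟩
    have hdvd_c : a ∣ n * c := ⟨-m', by linarith [hX]⟩
    obtain ⟨k, hk⟩ := dvd_of_dvd_mul_gcd hgcd hdvd_b hdvd_c
    refine mem_closure_pairC.2 ⟨m, k, ?_⟩
    rw [hβeq, hk]
    push_cast
    ring
  · apply (AddSubgroup.closure_le _).2
    rintro z (h | h) <;> subst z
    · exact (multiplierRing _).one_mem
    · apply mem_multiplierRing_closure_pair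
      · exact mem_closure_pairC.2 ⟨0, a, by push_cast; ring⟩
      · refine mem_closure_pairC.2 ⟨-c, -b, ?_⟩
        push_cast
        linear_combination v * hrel

lemma conj_relations {ω : ℂ} (him : ω.im ≠ 0) {a b c : ℤ} (ha : (a : ℂ) ≠ 0)
    (hrel : (a : ℂ) * ω ^ 2 + b * ω + c = 0) :
    (a : ℂ) * (ω + (starRingEnd ℂ) ω) = -b ∧ (a : ℂ) * (ω * (starRingEnd ℂ) ω) = c := by
  have hconj : (a : ℂ) * ((starRingEnd ℂ) ω) ^ 2 + b * ((starRingEnd ℂ) ω) + c = 0 := by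
    have := congrArg (starRingEnd ℂ) hrel
    simpa [map_add, map_mul, map_pow] using this
  have hdiff : ω - (starRingEnd ℂ) ω ≠ 0 := by
    rw [Complex.sub_conj]
    simp [Complex.ext_iff]
    exact him
  have hsum : (a : ℂ) * (ω + (starRingEnd ℂ) ω) = -b := by
    have hfac : (ω - (starRingEnd ℂ) ω) * ((a : ℂ) * (ω + (starRingEnd ℂ) ω) + b) = 0 := by
      linear_combination hrel - hconj
    rcases mul_eq_zero.mp hfac with h' | h'
    · exact absurd h' hdiff
    · linear_combination h'
  refine ⟨hsum, ?_⟩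
  have : (a : ℂ) * (ω * (starRingEnd ℂ) ω) - c =
      -(((a : ℂ) * ω ^ 2 + b * ω + c)) + ω * ((a : ℂ) * (ω + (starRingEnd ℂ) ω) + b) := by
    ring
  rw [hrel, hsum] at this
  linear_combination this


lemma conjProd {v ω : ℂ} (hv : v ≠ 0) (him : ω.im ≠ 0) {a b c : ℤ} (ha : (a : ℂ) ≠ 0)
    (hgcd : Int.gcd a (Int.gcd b c) = 1) (hrel : (a : ℂ) * ω ^ 2 + b * ω + c = 0) :
    latticeProduct (AddSubgroup.closure {v, v * ω})
      (AddSubgroup.closure {(starRingEnd ℂ) v, (starRingEnd ℂ) v * (starRingEnd ℂ) ω}) =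
    AddSubgroup.closure {v * (starRingEnd ℂ) v / a, v * (starRingEnd ℂ) v * ω} := by
  obtain ⟨hsum, hprod⟩ := conj_relations him ha hrel
  set vb := (starRingEnd ℂ) v with hvb
  set ωb := (starRingEnd ℂ) ω with hωb
  rw [latticeProduct_closure_pair]
  set u := v * vb with hu
  apply le_antisymm
  · apply (AddSubgroup.closure_le _).2
    rintro z (h | h | h | h) <;> subst z
    · refine mem_closure_pairC.2 ⟨a, 0, ?_⟩
      field_simp
      simp
    · refine mem_closure_pairC.2 ⟨-b, -1, ?_⟩
      push_cast
      field_simp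
      linear_combination (v * vb) * hsum
    · exact mem_closure_pairC.2 ⟨0, 1, by push_cast; ring⟩
    · refine mem_closure_pairC.2 ⟨c, 0, ?_⟩
      push_cast
      field_simp
      linear_combination (v * vb) * hprod
  · apply (AddSubgroup.closure_le _).2
    obtain ⟨x, y, z, hxyz⟩ := bezout3 hgcd
    have hxyzC : (a : ℂ) * x + b * y + c * z = 1 := by exact_mod_cast hxyz
    rintro g (h | h) <;> subst g
    · have heq : u / a = ((x : ℤ) : ℂ) * (v * vb) + ((-y : ℤ) : ℂ) * (v * (vb * ωb)) +
          ((-y : ℤ) : ℂ) * (v * ω * vb) + ((z : ℤ) : ℂ) * (v * ω * (vb * ωb)) := by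
        push_cast
        field_simp
        linear_combination ((y : ℂ) * (v * vb)) * hsum - ((z : ℂ) * (v * vb)) * hprod -
          (v * vb) * hxyzC
      rw [show v * vb / a = u / a from rfl, heq]
      exact quad_mem_closure x (-y) (-y) z
    · rw [show v * vb * ω = v * ω * vb by ring]
      exact AddSubgroup.subset_closure (by simp)


lemma mem_of_rat_coords {ω z : ℂ} {x y : ℚ} {D : ℤ} (hD : (D : ℂ) ≠ 0)
    (hx : ((x.den : ℤ)) ∣ D) (hy : ((y.den : ℤ)) ∣ D) (hz : z = (x : ℂ) + (y : ℂ) * ω) :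
    z ∈ AddSubgroup.closure ({(D : ℂ)⁻¹, (D : ℂ)⁻¹ * ω} : Set ℂ) := by
  obtain ⟨m, hm⟩ := int_of_den_dvd x D hx
  obtain ⟨n, hn⟩ := int_of_den_dvd y D hy
  refine mem_closure_pairC.2 ⟨m, n, ?_⟩
  rw [hz]
  field_simp
  linear_combination hm + ω * hn

/-- Let `Λ₁, Λ₂ ⊆ ℂ` be isogenous lattices each having complex multiplication,
with `End(Λᵢ) = 𝒪ᵢ`.  Then `𝒪₁` and `𝒪₂` are orders in the same imaginary quadratic number
field `K`, and `End(Λ₁·Λ₂) = 𝒪₁·𝒪₂`, which is the smallest order of `K` containing both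
`𝒪₁` and `𝒪₂`. -/
theorem statement12 (Λ₁ Λ₂ : AddSubgroup ℂ)
    (hΛ₁ : IsLattice Λ₁) (hΛ₂ : IsLattice Λ₂)
    (hisog : ∃ α : ℂ, α ≠ 0 ∧ ∀ x ∈ Λ₁, α * x ∈ Λ₂)
    (hCM₁ : ∃ α ∈ multiplierRing Λ₁, ∀ n : ℤ, α ≠ (n : ℂ))
    (hCM₂ : ∃ α ∈ multiplierRing Λ₂, ∀ n : ℤ, α ≠ (n : ℂ)) :
    ∃ K : Subfield ℂ, IsImagQuad K ∧
      IsOrderIn K (multiplierRing Λ₁) ∧ IsOrderIn K (multiplierRing Λ₂) ∧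
      IsOrderIn K (multiplierRing (latticeProduct Λ₁ Λ₂)) ∧
      (multiplierRing (latticeProduct Λ₁ Λ₂)).toAddSubgroup =
        latticeProduct (multiplierRing Λ₁).toAddSubgroup
          (multiplierRing Λ₂).toAddSubgroup ∧
      multiplierRing Λ₁ ≤ multiplierRing (latticeProduct Λ₁ Λ₂) ∧
      multiplierRing Λ₂ ≤ multiplierRing (latticeProduct Λ₁ Λ₂) ∧
      ∀ O' : Subring ℂ, IsOrderIn K O' →
        multiplierRing Λ₁ ≤ O' → multiplierRing Λ₂ ≤ O' →
        multiplierRing (latticeProduct Λ₁ Λ₂) ≤ O' := by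
  classical
  obtain ⟨v₁, w₁, hli₁, hΛe₁⟩ := hΛ₁
  obtain ⟨v₂, w₂, hli₂, hΛe₂⟩ := hΛ₂
  obtain ⟨hv₁, him₁⟩ := li_nonreal hli₁
  obtain ⟨hv₂, him₂⟩ := li_nonreal hli₂
  set ω₁ := w₁ / v₁ with hω₁def
  set ω₂ := w₂ / v₂ with hω₂def
  have hw₁ : w₁ = v₁ * ω₁ := by rw [hω₁def]; field_simp
  have hw₂ : w₂ = v₂ * ω₂ := by rw [hω₂def]; field_simp
  rw [hw₁] at hΛe₁
  rw [hw₂] at hΛe₂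
  have reprm : ∀ (v ω : ℂ), v ≠ 0 → ∀ β ∈ multiplierRing (AddSubgroup.closure {v, v * ω}),
      ∃ m n : ℤ, β = (m : ℂ) + n * ω := by
    intro v ω hv β hβ
    have h1 : β * v ∈ AddSubgroup.closure ({v, v * ω} : Set ℂ) :=
      hβ v (AddSubgroup.subset_closure (by simp))
    obtain ⟨m, n, hmn⟩ := mem_closure_pairC.1 h1
    exact ⟨m, n, mul_right_cancel₀ hv (by rw [hmn]; ring)⟩
  obtain ⟨τ₁, hτ₁mem, hτ₁int⟩ := hCM₁
  obtain ⟨τ₂, hτ₂mem, hτ₂int⟩ := hCM₂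
  rw [hΛe₁] at hτ₁mem
  rw [hΛe₂] at hτ₂mem
  obtain ⟨mτ₁, nτ₁, hτ₁eq⟩ := reprm v₁ ω₁ hv₁ τ₁ hτ₁mem
  obtain ⟨mτ₂, nτ₂, hτ₂eq⟩ := reprm v₂ ω₂ hv₂ τ₂ hτ₂mem
  have hnτ₁ : nτ₁ ≠ 0 := by rintro rfl; exact hτ₁int mτ₁ (by simpa using hτ₁eq)
  have hnτ₂ : nτ₂ ≠ 0 := by rintro rfl; exact hτ₂int mτ₂ (by simpa using hτ₂eq)
  have hsq : ∀ (v ω τ : ℂ) (mτ nτ : ℤ), v ≠ 0 → nτ ≠ 0 →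
      τ ∈ multiplierRing (AddSubgroup.closure {v, v * ω}) → τ = (mτ : ℂ) + nτ * ω →
      ∃ s t : ℚ, ω ^ 2 = (s : ℂ) + t * ω := by
    intro v ω τ mτ nτ hv hnτ hτ hτeq
    obtain ⟨m', n', hsq'⟩ := reprm v ω hv (τ * τ) ((multiplierRing _).mul_mem hτ hτ)
    refine ⟨((m' - mτ ^ 2 : ℤ) : ℚ) / ((nτ ^ 2 : ℤ) : ℚ),
      ((n' - 2 * mτ * nτ : ℤ) : ℚ) / ((nτ ^ 2 : ℤ) : ℚ), ?_⟩
    have hnτC : (nτ : ℂ) ≠ 0 := Int.cast_ne_zero.2 hnτ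
    push_cast
    field_simp
    linear_combination hsq' - (τ + (mτ : ℂ) + nτ * ω) * hτeq
  obtain ⟨s₁, t₁, hrelQ₁⟩ := hsq v₁ ω₁ τ₁ mτ₁ nτ₁ hv₁ hnτ₁ hτ₁mem hτ₁eq
  obtain ⟨s₂, t₂, hrelQ₂⟩ := hsq v₂ ω₂ τ₂ mτ₂ nτ₂ hv₂ hnτ₂ hτ₂mem hτ₂eq
  obtain ⟨a₁, b₁, c₁, ha₁pos, hgcd₁, hrel₁⟩ := exists_primitive_rel s₁ t₁ hrelQ₁
  obtain ⟨a₂, b₂, c₂, ha₂pos, hgcd₂, hrel₂⟩ := exists_primitive_rel s₂ t₂ hrelQ₂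
  have ha₁ : (a₁ : ℂ) ≠ 0 := Int.cast_ne_zero.2 (by omega)
  have ha₂ : (a₂ : ℂ) ≠ 0 := Int.cast_ne_zero.2 (by omega)
  set K := ratSpan2 ω₁ s₁ t₁ hrelQ₁ him₁ with hKdef
  have hω₁K : ω₁ ∈ K := ⟨0, 1, by simp⟩
  obtain ⟨α, hα, hmap⟩ := hisog
  have hω₂K : ω₂ ∈ K := by
    have h1 : α * v₁ ∈ Λ₂ := hmap v₁ (by
      rw [hΛe₁]; exact AddSubgroup.subset_closure (by simp))
    have h2 : α * (v₁ * ω₁) ∈ Λ₂ := hmap _ (by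
      rw [hΛe₁]; exact AddSubgroup.subset_closure (by simp))
    rw [hΛe₂] at h1 h2
    obtain ⟨p, q, hpq⟩ := mem_closure_pairC.1 h1
    obtain ⟨r, s', hrs⟩ := mem_closure_pairC.1 h2
    have hne : (p : ℂ) + q * ω₂ ≠ 0 := by
      intro h0
      apply mul_ne_zero hα hv₁
      have heq : α * v₁ = v₂ * ((p : ℂ) + q * ω₂) := by rw [hpq]; ring
      rw [heq, h0, mul_zero]
    have hE : ((p : ℂ) + q * ω₂) * ω₁ = (r : ℂ) + s' * ω₂ := by
      apply mul_left_cancel₀ hv₂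
      have e1 : v₂ * (((p : ℂ) + q * ω₂) * ω₁) = (α * v₁) * ω₁ := by rw [hpq]; ring
      have e2 : v₂ * ((r : ℂ) + s' * ω₂) = α * (v₁ * ω₁) := by rw [hrs]; ring
      rw [e1, e2]; ring
    by_cases hden : (s' : ℂ) - q * ω₁ = 0
    · exfalso
      have hq : (q : ℝ) * ω₁.im = 0 := by
        have := congrArg Complex.im hden
        simpa [Complex.sub_im, Complex.mul_im] using this
      have hq0 : q = 0 := by
        rcases mul_eq_zero.mp hq with h' | h'
        · exact_mod_cast h'
        · exact absurd h' him₁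
      subst hq0
      have hs0 : (s' : ℂ) = 0 := by simpa using hden
      have hp0 : (p : ℂ) ≠ 0 := by simpa using hne
      have : (p : ℂ) * ω₁ = (r : ℂ) := by
        have := hE
        rw [hs0] at this
        simpa using this
      have him0 : (p : ℝ) * ω₁.im = 0 := by
        have := congrArg Complex.im this
        simpa [Complex.mul_im] using this
      rcases mul_eq_zero.mp him0 with h' | h'
      · exact hp0 (by exact_mod_cast h')
      · exact him₁ h'
    · have hsolve : ω₂ = ((p : ℂ) * ω₁ - r) / ((s' : ℂ) - q * ω₁) := by
        rw [eq_div_iff hden]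
        linear_combination -hE
      rw [hsolve]
      apply K.div_mem
      · exact K.sub_mem (K.mul_mem (K.intCast_mem p) hω₁K) (K.intCast_mem r)
      · exact K.sub_mem (K.intCast_mem s') (K.mul_mem (K.intCast_mem q) hω₁K)
  obtain ⟨pp, qq, hω₂eq⟩ := hω₂K
  have hend₁ : (multiplierRing Λ₁).toAddSubgroup = AddSubgroup.closure {1, (a₁ : ℂ) * ω₁} := by
    rw [hΛe₁]; exact endChar hv₁ him₁ ha₁ hgcd₁ hrel₁
  have hend₂ : (multiplierRing Λ₂).toAddSubgroup = AddSubgroup.closure {1, (a₂ : ℂ) * ω₂} := by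
    rw [hΛe₂]; exact endChar hv₂ him₂ ha₂ hgcd₂ hrel₂
  have hKle₁ : multiplierRing Λ₁ ≤ K.toSubring := by
    intro β hβ
    rw [hΛe₁] at hβ
    obtain ⟨m, n, h⟩ := reprm v₁ ω₁ hv₁ β hβ
    exact ⟨(m : ℚ), (n : ℚ), by rw [h]; push_cast; ring⟩
  have hKle₂ : multiplierRing Λ₂ ≤ K.toSubring := by
    intro β hβ
    rw [hΛe₂] at hβ
    obtain ⟨m, n, h⟩ := reprm v₂ ω₂ hv₂ β hβ
    refine ⟨(m : ℚ) + n * pp, (n : ℚ) * qq, ?_⟩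
    rw [h, hω₂eq]; push_cast; ring
  have hG : latticeProduct (multiplierRing Λ₁).toAddSubgroup (multiplierRing Λ₂).toAddSubgroup
      = AddSubgroup.closure {1, (a₂ : ℂ) * ω₂, (a₁ : ℂ) * ω₁,
          ((a₁ : ℂ) * ω₁) * ((a₂ : ℂ) * ω₂)} := by
    rw [hend₁, hend₂, latticeProduct_closure_pair, one_mul, one_mul, mul_one]
  -- stage 2
  set C₁ := AddSubgroup.closure {(starRingEnd ℂ) v₁, (starRingEnd ℂ) v₁ * (starRingEnd ℂ) ω₁}
    with hC₁def
  set C₂ := AddSubgroup.closure {(starRingEnd ℂ) v₂, (starRingEnd ℂ) v₂ * (starRingEnd ℂ) ω₂}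
    with hC₂def
  have hGle : latticeProduct (multiplierRing Λ₁).toAddSubgroup
      (multiplierRing Λ₂).toAddSubgroup ≤ (multiplierRing (latticeProduct Λ₁ Λ₂)).toAddSubgroup := by
    apply latticeProduct_le
    intro β₁ hβ₁ β₂ hβ₂
    intro x hx
    refine closure_mul_left_mem hx ?_
    rintro z ⟨a, ha, b, hb, rfl⟩
    rw [mul_mul_mul_comm]
    exact mul_mem_latticeProduct (hβ₁ a ha) (hβ₂ b hb)
  have hO1le : multiplierRing Λ₁ ≤ multiplierRing (latticeProduct Λ₁ Λ₂) := by
    intro β hβ x hx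
    refine closure_mul_left_mem hx ?_
    rintro z ⟨a, ha, b, hb, rfl⟩
    rw [← mul_assoc]
    exact mul_mem_latticeProduct (hβ a ha) hb
  have hO2le : multiplierRing Λ₂ ≤ multiplierRing (latticeProduct Λ₁ Λ₂) := by
    intro β hβ x hx
    refine closure_mul_left_mem hx ?_
    rintro z ⟨a, ha, b, hb, rfl⟩
    rw [show β * (a * b) = a * (β * b) by ring]
    exact mul_mem_latticeProduct ha (hβ b hb)
  set u₁ := v₁ * (starRingEnd ℂ) v₁ with hu₁def
  set u₂ := v₂ * (starRingEnd ℂ) v₂ with hu₂def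
  have hu₁0 : u₁ ≠ 0 := by
    apply mul_ne_zero hv₁
    intro h0
    exact hv₁ (by simpa using congrArg (starRingEnd ℂ) h0)
  have hu₂0 : u₂ ≠ 0 := by
    apply mul_ne_zero hv₂
    intro h0
    exact hv₂ (by simpa using congrArg (starRingEnd ℂ) h0)
  have hR : latticeProduct (latticeProduct Λ₁ Λ₂) (latticeProduct C₁ C₂) =
      AddSubgroup.closure {u₁ / a₁ * (u₂ / a₂), u₁ / a₁ * (u₂ * ω₂),
        u₁ * ω₁ * (u₂ / a₂), u₁ * ω₁ * (u₂ * ω₂)} := by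
    have step : latticeProduct (latticeProduct Λ₁ Λ₂) (latticeProduct C₁ C₂) =
        latticeProduct (latticeProduct Λ₁ C₁) (latticeProduct Λ₂ C₂) := by
      rw [latticeProduct_assoc, ← latticeProduct_assoc Λ₂ C₁ C₂, latticeProduct_comm Λ₂ C₁,
        latticeProduct_assoc C₁ Λ₂ C₂, ← latticeProduct_assoc Λ₁ C₁ (latticeProduct Λ₂ C₂)]
    rw [step, hΛe₁, hΛe₂, hC₁def, hC₂def, conjProd hv₁ him₁ ha₁ hgcd₁ hrel₁,
      conjProd hv₂ him₂ ha₂ hgcd₂ hrel₂, latticeProduct_closure_pair, hu₁def, hu₂def]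
  have hmain_le : (multiplierRing (latticeProduct Λ₁ Λ₂)).toAddSubgroup ≤
      latticeProduct (multiplierRing Λ₁).toAddSubgroup (multiplierRing Λ₂).toAddSubgroup := by
    intro β hβ
    have hUmem : u₁ / a₁ * (u₂ / a₂) ∈
        latticeProduct (latticeProduct Λ₁ Λ₂) (latticeProduct C₁ C₂) := by
      rw [hR]
      exact AddSubgroup.subset_closure (by simp)
    have hβR : β * (u₁ / a₁ * (u₂ / a₂)) ∈
        latticeProduct (latticeProduct Λ₁ Λ₂) (latticeProduct C₁ C₂) := by
      refine closure_mul_left_mem hUmem ?_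
      rintro z ⟨pz, hp, qz, hq, rfl⟩
      rw [← mul_assoc]
      exact mul_mem_latticeProduct (hβ pz hp) hq
    rw [hR] at hβR
    obtain ⟨m, n, p', q', hcomb⟩ := mem_closure_quadC hβR
    have hUne : u₁ / a₁ * (u₂ / a₂) ≠ 0 :=
      mul_ne_zero (div_ne_zero hu₁0 ha₁) (div_ne_zero hu₂0 ha₂)
    have hβeq : β = (m : ℂ) * 1 + n * ((a₂ : ℂ) * ω₂) + p' * ((a₁ : ℂ) * ω₁) +
        q' * ((a₁ : ℂ) * ω₁ * ((a₂ : ℂ) * ω₂)) := by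
      apply mul_right_cancel₀ hUne
      rw [hcomb]
      field_simp
    rw [hG, hβeq]
    exact quad_mem_closure m n p' q'
  have hmainEq : (multiplierRing (latticeProduct Λ₁ Λ₂)).toAddSubgroup =
      latticeProduct (multiplierRing Λ₁).toAddSubgroup (multiplierRing Λ₂).toAddSubgroup :=
    le_antisymm hmain_le hGle
  -- stage 3
  have hω₂K' : ω₂ ∈ K := ⟨pp, qq, hω₂eq⟩
  have li_one : ∀ (aa : ℤ) (ωω : ℂ), aa ≠ 0 → ωω.im ≠ 0 →
      LinearIndependent ℝ ![1, (aa : ℂ) * ωω] := by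
    intro aa ωω h1 h2
    rw [li_det]
    have : (1 : ℂ).re * ((aa : ℂ) * ωω).im - (1 : ℂ).im * ((aa : ℂ) * ωω).re =
        (aa : ℝ) * ωω.im := by
      simp [Complex.mul_im, Complex.mul_re]
    rw [this]
    exact mul_ne_zero (Int.cast_ne_zero.2 h1) h2
  set r₁ : ℚ := a₂ * pp with hr₁
  set r₂ : ℚ := a₂ * qq with hr₂
  set r₃ : ℚ := a₁ * a₂ * qq * s₁ with hr₃
  set r₄ : ℚ := a₁ * (a₂ * (pp + qq * t₁)) with hr₄
  set D : ℤ := (r₁.den : ℤ) * r₂.den * r₃.den * r₄.den with hD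
  have hDpos : (0 : ℤ) < D := by
    rw [hD]
    have h1 : (0 : ℤ) < (r₁.den : ℤ) := by exact_mod_cast r₁.pos
    have h2 : (0 : ℤ) < (r₂.den : ℤ) := by exact_mod_cast r₂.pos
    have h3 : (0 : ℤ) < (r₃.den : ℤ) := by exact_mod_cast r₃.pos
    have h4 : (0 : ℤ) < (r₄.den : ℤ) := by exact_mod_cast r₄.pos
    positivity
  have hD0 : (D : ℂ) ≠ 0 := Int.cast_ne_zero.2 (by omega)
  have hquadle : AddSubgroup.closure {1, (a₂ : ℂ) * ω₂, (a₁ : ℂ) * ω₁,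
      ((a₁ : ℂ) * ω₁) * ((a₂ : ℂ) * ω₂)} ≤
      AddSubgroup.closure ({(D : ℂ)⁻¹, (D : ℂ)⁻¹ * ω₁} : Set ℂ) := by
    apply (AddSubgroup.closure_le _).2
    rintro z (h | h | h | h) <;> subst z
    · exact mem_of_rat_coords (x := 1) (y := 0) hD0 (by simp) (by simp) (by norm_num)
    · refine mem_of_rat_coords (x := r₁) (y := r₂) hD0
        ⟨(r₂.den : ℤ) * r₃.den * r₄.den, by rw [hD]; ring⟩
        ⟨(r₁.den : ℤ) * r₃.den * r₄.den, by rw [hD]; ring⟩ ?_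
      rw [hr₁, hr₂, hω₂eq]
      push_cast
      ring
    · exact mem_of_rat_coords (x := 0) (y := (a₁ : ℚ)) hD0 (by simp) (by simp)
        (by push_cast; ring)
    · refine mem_of_rat_coords (x := r₃) (y := r₄) hD0
        ⟨(r₁.den : ℤ) * r₂.den * r₄.den, by rw [hD]; ring⟩
        ⟨(r₁.den : ℤ) * r₂.den * r₃.den, by rw [hD]; ring⟩ ?_
      rw [hr₃, hr₄, hω₂eq]
      push_cast
      linear_combination ((a₁ : ℂ) * a₂ * qq) * hrelQ₁
  have h1mem : (1 : ℂ) ∈ AddSubgroup.closure {1, (a₂ : ℂ) * ω₂, (a₁ : ℂ) * ω₁,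
      ((a₁ : ℂ) * ω₁) * ((a₂ : ℂ) * ω₂)} := AddSubgroup.subset_closure (by simp)
  have ha₁ω₁mem : (a₁ : ℂ) * ω₁ ∈ AddSubgroup.closure {1, (a₂ : ℂ) * ω₂, (a₁ : ℂ) * ω₁,
      ((a₁ : ℂ) * ω₁) * ((a₂ : ℂ) * ω₂)} := AddSubgroup.subset_closure (by simp)
  obtain ⟨x, y, hxyli, hxyeq⟩ := sublattice (li_scaled (inv_ne_zero hD0) him₁) _
    hquadle h1mem ha₁ω₁mem (li_one a₁ ω₁ (by omega) him₁)
  have hKleP : multiplierRing (latticeProduct Λ₁ Λ₂) ≤ K.toSubring := by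
    intro β hβ
    have hβ'' : β ∈ (multiplierRing (latticeProduct Λ₁ Λ₂)).toAddSubgroup := hβ
    rw [hmainEq, hG] at hβ''
    refine (AddSubgroup.closure_le K.toSubring.toAddSubgroup).2 ?_ hβ''
    rintro z (h | h | h | h) <;> subst z
    · exact K.one_mem
    · exact K.mul_mem (K.intCast_mem a₂) hω₂K'
    · exact K.mul_mem (K.intCast_mem a₁) hω₁K
    · exact K.mul_mem (K.mul_mem (K.intCast_mem a₁) hω₁K)
        (K.mul_mem (K.intCast_mem a₂) hω₂K')
  refine ⟨K, ratSpan2_isImagQuad ω₁ s₁ t₁ hrelQ₁ him₁,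
    ⟨hKle₁, 1, (a₁ : ℂ) * ω₁, li_one a₁ ω₁ (by omega) him₁, hend₁⟩,
    ⟨hKle₂, 1, (a₂ : ℂ) * ω₂, li_one a₂ ω₂ (by omega) him₂, hend₂⟩,
    ⟨hKleP, x, y, hxyli, ?_⟩, hmainEq, hO1le, hO2le, ?_⟩
  · rw [hmainEq, hG]
    exact hxyeq
  · intro O' hO' h1' h2' β hβ
    have hβ'' : β ∈ latticeProduct (multiplierRing Λ₁).toAddSubgroup
        (multiplierRing Λ₂).toAddSubgroup := by
      rw [← hmainEq]
      exact hβ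
    exact latticeProduct_le (C := O'.toAddSubgroup)
      (fun b₁ hb₁ b₂ hb₂ => O'.mul_mem (h1' hb₁) (h2' hb₂)) hβ''
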